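/- The weak combinatorics of the arrangement 𝒜(31,2) is (31; t₂ = 54, t₃ = 42, t₄ = 21, t₅ = 6, t₆ = 1, t₈ = 3), and t_k = 0 for every other k ≥ 2; that is, the number of points of ℙ²(ℝ) at which exactly k of the 31 forms of 𝒜(31,2) vanish equals 54 for k = 2, 42 for k = 3, 21 for k = 4, 6 for k = 5, 1 for k = 6, 3 for k = 8, and 0 for all other k ≥ 2. -/

import Mathlib

/-!
Two distinct lines of the arrangement meet in exactly one point, so sorting the ordered pairs of
distinct lines by their meeting point gives `t_k · k(k-1) = #{(ℓ, ℓ') : ℓ ∩ ℓ' lies on exactly k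
lines}`. All coefficients lie in `ℤ[√3]`, which embeds in `ℝ`; the meeting point of two lines is the
cross product of their coefficient vectors, so the right-hand side is an exact computation in `ℤ√3`.
-/

open MvPolynomial

noncomputable section

/-- The polynomial ring `S = ℝ[x,y,z]`. -/
abbrev S : Type := MvPolynomial (Fin 3) ℝ

/-- `e = √3` as a constant polynomial. -/
def e : S := C (Real.sqrt 3)
def x : S := X 0
def y : S := X 1
def z : S := X 2

/-- The linear form `ℓ` vanishes at the point of `ℙ²(ℝ)` represented by any
nonzero vector mapping to `P`. -/
def Vanish (ℓ : S) (P : Projectivization ℝ (Fin 3 → ℝ)) : Prop :=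
  ∀ (v : Fin 3 → ℝ) (hv : v ≠ 0), Projectivization.mk ℝ v hv = P → eval v ℓ = 0

/-- `tk A k` is the number of points of `ℙ²(ℝ)` at which exactly `k` of the
forms of `A` vanish. -/
def tk (A : Finset S) (k : ℕ) : ℕ :=
  {P : Projectivization ℝ (Fin 3 → ℝ) |
    {ℓ : S | ℓ ∈ A ∧ Vanish ℓ P}.ncard = k}.ncard

/-- The arrangement 𝒜(31,2). -/
def A312 : Finset S :=
  { (z),
    (y),
    (x),
    (e*x+y),
    (e*x-y),
    (x+e*y),
    (x-e*y),
    (2*x+e*z),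
    (2*x-e*z),
    (x+e*z),
    (x-e*z),
    (x+e*y+e*z),
    (x+e*y-e*z),
    (x-e*y+e*z),
    (x-e*y-e*z),
    (x+e*y+2*e*z),
    (x+e*y-2*e*z),
    (x-e*y+2*e*z),
    (x-e*y-2*e*z),
    (e*x+y+z),
    (e*x+y-z),
    (e*x-y+z),
    (e*x-y-z),
    (2*y+z),
    (2*y-z),
    (x+e*y+3*e*z),
    (x+e*y-3*e*z),
    (x-e*y+3*e*z),
    (x-e*y-3*e*z),
    (2*x+3*e*z),
    (2*x-3*e*z) }

open Finset Matrix Zsqrtd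

theorem ncard_mul_eq_ncard_offDiag {α β : Type*} (A : Finset α) (I : α → β → Prop)
    (hmeet : ∀ a ∈ A, ∀ b ∈ A, a ≠ b → ∃! P, I a P ∧ I b P) {k : ℕ} (hk : 2 ≤ k) :
    {P | {a | a ∈ A ∧ I a P}.ncard = k}.ncard * (k * (k - 1)) =
      {p : α × α | p ∈ A.offDiag ∧
        ∃ P, I p.1 P ∧ I p.2 P ∧ {a | a ∈ A ∧ I a P}.ncard = k}.ncard := by
  classical
  set F : β → Finset α := fun P => {a ∈ A | I a P}
  have hF (P : β) : {a | a ∈ A ∧ I a P}.ncard = #(F P) := by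
    rw [← Set.ncard_coe_finset]; congr 1; ext; simp [F]
  simp only [hF]
  have hpair {P Q : β} {a b : α} (hab : a ≠ b) (hP : a ∈ F P ∧ b ∈ F P)
      (hQ : a ∈ F Q ∧ b ∈ F Q) : P = Q := by
    simp only [F, mem_filter] at hP hQ
    exact (hmeet a hP.1.1 b hP.2.1 hab).unique ⟨hP.1.2, hP.2.2⟩ ⟨hQ.1.2, hQ.2.2⟩
  set T := {P | #(F P) = k}
  -- a point on at least two lines of `A` is determined by the set of lines through it
  have hT : T.Finite := by
    refine Set.Finite.of_finite_image (f := F) ((A.powerset.finite_toSet).subset ?_) ?_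
    · rintro _ ⟨P, -, rfl⟩
      exact mem_powerset.2 (filter_subset _ A)
    · intro P hP Q hQ hPQ
      obtain ⟨a, ha, b, hb, hab⟩ := one_lt_card.1 (show 1 < #(F P) by rw [hP]; omega)
      exact hpair hab ⟨ha, hb⟩ (by rw [← hPQ]; exact ⟨ha, hb⟩)
  have hpairs : {p : α × α | p ∈ A.offDiag ∧ ∃ P, I p.1 P ∧ I p.2 P ∧ #(F P) = k}
      = ↑(hT.toFinset.biUnion fun P => (F P).offDiag) := by
    ext ⟨a, b⟩
    simp only [Set.mem_ofPred_eq, mem_offDiag, coe_biUnion, Set.Finite.coe_toFinset,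
      Set.mem_iUnion, mem_coe, exists_prop, T]
    constructor
    · rintro ⟨⟨ha, hb, hab⟩, P, haP, hbP, hPk⟩
      exact ⟨P, hPk, mem_filter.2 ⟨ha, haP⟩, mem_filter.2 ⟨hb, hbP⟩, hab⟩
    · rintro ⟨P, hPk, haP, hbP, hab⟩
      obtain ⟨ha, haP⟩ := mem_filter.1 haP
      obtain ⟨hb, hbP⟩ := mem_filter.1 hbP
      exact ⟨⟨ha, hb, hab⟩, P, haP, hbP, hPk⟩
  rw [hpairs, Set.ncard_coe_finset, card_biUnion]
  · rw [sum_const_nat (m := k * (k - 1)), ← Set.ncard_eq_toFinset_card T hT]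
    intro P hP
    rw [offDiag_card, (hT.mem_toFinset.1 hP : #(F P) = k), Nat.mul_sub_one]
  · intro P _ Q _ hPQ
    refine disjoint_left.2 fun ⟨a, b⟩ h₁ h₂ => hPQ ?_
    obtain ⟨ha, hb, hab⟩ := mem_offDiag.1 h₁
    obtain ⟨ha', hb', -⟩ := mem_offDiag.1 h₂
    exact hpair hab ⟨ha, hb⟩ ⟨ha', hb'⟩

lemma Finset.offDiag_image_of_injective {α β : Type*} [DecidableEq α] [DecidableEq β]
    {f : α → β} (hf : Function.Injective f) (s : Finset α) :
    (s.image f).offDiag = s.offDiag.image (Prod.map f f) := by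
  ext ⟨a, b⟩
  simp only [mem_offDiag, mem_image, Prod.exists, Prod.map, Prod.mk.injEq]
  constructor
  · rintro ⟨⟨u, hu, rfl⟩, ⟨v, hv, rfl⟩, huv⟩
    exact ⟨u, v, ⟨hu, hv, fun h => huv (h ▸ rfl)⟩, rfl, rfl⟩
  · rintro ⟨u, v, ⟨hu, hv, huv⟩, rfl, rfl⟩
    exact ⟨⟨u, hu, rfl⟩, ⟨v, hv, rfl⟩, hf.ne huv⟩

lemma RingHom.comp_crossProduct {R T : Type*} [CommRing R] [CommRing T] (f : R →+* T)
    (u v : Fin 3 → R) : f ∘ (u ⨯₃ v) = (f ∘ u) ⨯₃ (f ∘ v) := by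
  funext i; fin_cases i <;> simp [cross_apply]

def linearForm (a : Fin 3 → ℝ) : S := ∑ i, C (a i) * X i

lemma eval_linearForm (a v : Fin 3 → ℝ) : eval v (linearForm a) = a ⬝ᵥ v := by
  simp [linearForm, dotProduct]

lemma linearForm_injective : Function.Injective linearForm := by
  intro a b h
  funext i
  simpa [linearForm, coeff_sum, coeff_C_mul, coeff_X, Finsupp.single_eq_single_iff]
    using congrArg (coeff (Finsupp.single i 1)) h

lemma vanish_linearForm_mk_iff (a v : Fin 3 → ℝ) (hv : v ≠ 0) :
    Vanish (linearForm a) (Projectivization.mk ℝ v hv) ↔ a ⬝ᵥ v = 0 := by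
  refine ⟨fun h => by simpa [eval_linearForm] using h v hv rfl, fun h w hw hwv => ?_⟩
  obtain ⟨t, rfl⟩ := (Projectivization.mk_eq_mk_iff' ℝ w v hw hv).1 hwv
  rw [eval_linearForm, dotProduct_smul, h, smul_zero]

lemma vanish_linearForm_and_iff {a b : Fin 3 → ℝ} (hab : a ⨯₃ b ≠ 0)
    (P : Projectivization ℝ (Fin 3 → ℝ)) :
    Vanish (linearForm a) P ∧ Vanish (linearForm b) P ↔
      P = Projectivization.mk ℝ (a ⨯₃ b) hab := by
  induction P using Projectivization.ind with | h v hv => ?_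
  rw [vanish_linearForm_mk_iff, vanish_linearForm_mk_iff]
  constructor
  · rintro ⟨ha, hb⟩
    rw [Projectivization.mk_eq_mk_iff_crossProduct_eq_zero, cross_cross_eq_smul_sub_smul',
      dotProduct_comm v b, ha, hb, zero_smul, zero_smul, sub_zero]
  · intro h
    obtain ⟨t, rfl⟩ := (Projectivization.mk_eq_mk_iff' ℝ v _ hv hab).1 h
    simp [dotProduct_smul, dot_self_cross, dot_cross_self]

def sqrtThreeToReal : ℤ√3 →+* ℝ := Zsqrtd.lift ⟨√3, by norm_num⟩

lemma sqrtThreeToReal_injective : Function.Injective sqrtThreeToReal :=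
  Zsqrtd.lift_injective _ fun n h => by
    have : n ≤ 2 := by nlinarith
    have : -2 ≤ n := by nlinarith
    interval_cases n <;> omega

lemma sqrtThreeToReal_comp_ne_zero {c : Fin 3 → ℤ√3} (hc : c ≠ 0) :
    sqrtThreeToReal ∘ c ≠ 0 := fun h =>
  hc (sqrtThreeToReal_injective.comp_left (h.trans (by ext; simp)))

def formOf (u : Fin 3 → ℤ√3) : S := linearForm (sqrtThreeToReal ∘ u)

lemma formOf_injective : Function.Injective formOf :=
  linearForm_injective.comp sqrtThreeToReal_injective.comp_left

lemma vanish_formOf_and_iff {u v : Fin 3 → ℤ√3} (huv : u ⨯₃ v ≠ 0)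
    (P : Projectivization ℝ (Fin 3 → ℝ)) :
    Vanish (formOf u) P ∧ Vanish (formOf v) P ↔
      P = Projectivization.mk ℝ (sqrtThreeToReal ∘ (u ⨯₃ v)) (sqrtThreeToReal_comp_ne_zero huv) := by
  have h := sqrtThreeToReal_comp_ne_zero huv
  rw [RingHom.comp_crossProduct] at h
  simp_rw [formOf, vanish_linearForm_and_iff h, RingHom.comp_crossProduct]

def lines : Finset (Fin 3 → ℤ√3) :=
  {![0, 0, 1], ![0, 1, 0], ![1, 0, 0], ![sqrtd, 1, 0], ![sqrtd, -1, 0], ![1, sqrtd, 0],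
   ![1, -sqrtd, 0], ![2, 0, sqrtd], ![2, 0, -sqrtd], ![1, 0, sqrtd], ![1, 0, -sqrtd],
   ![1, sqrtd, sqrtd], ![1, sqrtd, -sqrtd], ![1, -sqrtd, sqrtd], ![1, -sqrtd, -sqrtd],
   ![1, sqrtd, 2 * sqrtd], ![1, sqrtd, -2 * sqrtd], ![1, -sqrtd, 2 * sqrtd],
   ![1, -sqrtd, -2 * sqrtd], ![sqrtd, 1, 1], ![sqrtd, 1, -1], ![sqrtd, -1, 1],
   ![sqrtd, -1, -1], ![0, 2, 1], ![0, 2, -1], ![1, sqrtd, 3 * sqrtd], ![1, sqrtd, -3 * sqrtd],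
   ![1, -sqrtd, 3 * sqrtd], ![1, -sqrtd, -3 * sqrtd], ![2, 0, 3 * sqrtd], ![2, 0, -3 * sqrtd]}

lemma A312_eq_image : A312 = lines.image formOf := by
  simp only [A312, lines, image_insert, image_singleton]
  repeat' first | refine congrArg₂ insert ?_ ?_ | refine congrArg singleton ?_
  all_goals
    simp [formOf, linearForm, Fin.sum_univ_three, sqrtThreeToReal, x, y, z, e, sub_eq_add_neg]

def linesThrough (c : Fin 3 → ℤ√3) : Finset (Fin 3 → ℤ√3) := {w ∈ lines | w ⬝ᵥ c = 0}

set_option maxRecDepth 10000 in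
lemma lines_card : #lines = 31 := by decide +kernel

set_option maxRecDepth 10000 in
lemma lines_cross_ne_zero : ∀ p ∈ lines.offDiag, p.1 ⨯₃ p.2 ≠ 0 := by decide +kernel

set_option maxRecDepth 100000 in
lemma map_card_linesThrough_offDiag :
    lines.offDiag.val.map (fun p => #(linesThrough (p.1 ⨯₃ p.2))) =
      108 • {2} + 252 • {3} + 252 • {4} + 120 • {5} + 30 • {6} + 168 • {8} := by
  decide +kernel

lemma A312_existsUnique_vanish :
    ∀ a ∈ A312, ∀ b ∈ A312, a ≠ b → ∃! P, Vanish a P ∧ Vanish b P := by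
  intro a ha b hb hab
  rw [A312_eq_image, mem_image] at ha hb
  obtain ⟨⟨u, hu, rfl⟩, ⟨v, hv, rfl⟩⟩ := And.intro ha hb
  have huv := lines_cross_ne_zero (u, v) (mem_offDiag.2 ⟨hu, hv, fun h => hab (congrArg formOf h)⟩)
  exact ⟨_, (vanish_formOf_and_iff huv _).2 rfl, fun P hP => (vanish_formOf_and_iff huv P).1 hP⟩

lemma ncard_A312_vanish_mk (c : Fin 3 → ℤ√3) (hc : sqrtThreeToReal ∘ c ≠ 0) :
    {ℓ | ℓ ∈ A312 ∧ Vanish ℓ (Projectivization.mk ℝ (sqrtThreeToReal ∘ c) hc)}.ncard =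
      #(linesThrough c) := by
  have : {ℓ | ℓ ∈ A312 ∧ Vanish ℓ (Projectivization.mk ℝ (sqrtThreeToReal ∘ c) hc)} =
      formOf '' ↑(linesThrough c) := by
    ext ℓ
    simp only [A312_eq_image, linesThrough, mem_image, coe_filter, Set.mem_image,
      Set.mem_ofPred_eq]
    constructor
    · rintro ⟨⟨w, hw, rfl⟩, hvan⟩
      refine ⟨w, ⟨hw, ?_⟩, rfl⟩
      rw [formOf, vanish_linearForm_mk_iff, ← RingHom.map_dotProduct] at hvan
      exact sqrtThreeToReal_injective (hvan.trans (map_zero _).symm)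
    · rintro ⟨w, ⟨hw, hwc⟩, rfl⟩
      refine ⟨⟨w, hw, rfl⟩, ?_⟩
      rw [formOf, vanish_linearForm_mk_iff, ← RingHom.map_dotProduct, hwc, map_zero]
  rw [this, Set.ncard_image_of_injective _ formOf_injective, Set.ncard_coe_finset]

lemma tk_A312_mul {k : ℕ} (hk : 2 ≤ k) :
    tk A312 k * (k * (k - 1)) =
      (lines.offDiag.val.map fun p => #(linesThrough (p.1 ⨯₃ p.2))).count k := by
  rw [tk, ncard_mul_eq_ncard_offDiag A312 Vanish A312_existsUnique_vanish hk,
    Multiset.count_map, ← filter_val, ← card_def, ← Set.ncard_coe_finset,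
    ← Set.ncard_image_of_injective _ (formOf_injective.prodMap formOf_injective)]
  have hoffDiag : A312.offDiag = lines.offDiag.image (Prod.map formOf formOf) := by
    rw [A312_eq_image, offDiag_image_of_injective formOf_injective]
  congr 1
  ext ⟨ℓ₁, ℓ₂⟩
  simp only [hoffDiag, Set.mem_ofPred_eq, mem_image, coe_filter, Set.mem_image, Prod.exists,
    Prod.map, Prod.mk.injEq]
  constructor
  · rintro ⟨⟨u, v, huv, rfl, rfl⟩, P, h₁, h₂, hP⟩
    obtain rfl := (vanish_formOf_and_iff (lines_cross_ne_zero _ huv) P).1 ⟨h₁, h₂⟩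
    rw [ncard_A312_vanish_mk] at hP
    exact ⟨u, v, ⟨huv, hP.symm⟩, rfl, rfl⟩
  · rintro ⟨u, v, ⟨huv, hk⟩, rfl, rfl⟩
    have hP := (vanish_formOf_and_iff (lines_cross_ne_zero _ huv) _).2 rfl
    exact ⟨⟨u, v, huv, rfl, rfl⟩, _, hP.1, hP.2, by rw [ncard_A312_vanish_mk]; exact hk.symm⟩

theorem stmt_5 :
    A312.card = 31 ∧
    tk A312 2 = 54 ∧ tk A312 3 = 42 ∧ tk A312 4 = 21 ∧
    tk A312 5 = 6 ∧ tk A312 6 = 1 ∧ tk A312 8 = 3 ∧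
    ∀ k : ℕ, 2 ≤ k → k ∉ ({2, 3, 4, 5, 6, 8} : Set ℕ) → tk A312 k = 0 := by
  have htk {k n : ℕ} (hk : 2 ≤ k)
      (hn : (108 • {2} + 252 • {3} + 252 • {4} + 120 • {5} + 30 • {6} + 168 • {8} :
        Multiset ℕ).count k = n * (k * (k - 1))) : tk A312 k = n := by
    refine Nat.eq_of_mul_eq_mul_right (m := k * (k - 1)) (Nat.mul_pos (by omega) (by omega)) ?_
    rw [tk_A312_mul hk, map_card_linesThrough_offDiag, hn]
  refine ⟨by rw [A312_eq_image, card_image_of_injective _ formOf_injective, lines_card],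
    htk le_rfl (by simp), htk (by norm_num) (by simp), htk (by norm_num) (by simp),
    htk (by norm_num) (by simp), htk (by norm_num) (by simp), htk (by norm_num) (by simp),
    fun k hk hk' => htk hk ?_⟩
  simp only [Set.mem_insert_iff, Set.mem_singleton_iff, not_or] at hk'
  simp [hk']
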